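/- Let H be a d×d complex Hermitian matrix with spectral decomposition H = Σ_{i=1}^M λ_i Π_i (eigenvalues ordered increasingly, nonzero pairwise-orthogonal Hermitian projections summing to the identity), and let β ≥ 0. Then the fidelity between the thermal state e^{−βH}/Tr[e^{−βH}] and the normalized ground-space projector Π_1/Tr[Π_1] equals 1/(1 + (1/d_G)·Σ_{i=2}^M e^{−β(λ_i−λ_1)} Tr[Π_i]), where d_G := Tr[Π_1]. -/

import Mathlib

open Matrix
open scoped ComplexOrder

/-- Positive semidefinite square root (junk value `0` off the PSD matrices). -/
noncomputable def msqrt {d : ℕ} (A : Matrix (Fin d) (Fin d) ℂ) : Matrix (Fin d) (Fin d) ℂ :=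
  open scoped Classical in
  if h : A.PosSemidef then
    (h.1.eigenvectorUnitary : Matrix (Fin d) (Fin d) ℂ) *
      diagonal (((↑) : ℝ → ℂ) ∘ (fun x => √x) ∘ h.1.eigenvalues) *
      (star h.1.eigenvectorUnitary : Matrix (Fin d) (Fin d) ℂ)
  else 0

/-- Fidelity `F(ρ,σ) = (Tr[√(√σ ρ √σ)])²`. -/
noncomputable def fidelity {d : ℕ} (ρ σ : Matrix (Fin d) (Fin d) ℂ) : ℝ :=
  ((msqrt (msqrt σ * ρ * msqrt σ)).trace.re) ^ 2

lemma aux_trace_nonneg {d : ℕ} {A : Matrix (Fin d) (Fin d) ℂ} (hA : A.PosSemidef) :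
    0 ≤ A.trace := by
  rw [Matrix.trace]
  apply Finset.sum_nonneg
  intro i _
  have h := hA.dotProduct_mulVec_nonneg (Pi.single i 1)
  simpa [dotProduct, Matrix.mulVec, Pi.single_apply, apply_ite,
    Finset.sum_ite_eq, Finset.sum_ite_eq', mul_comm] using h

lemma aux_psd_smul {d : ℕ} {Q : Matrix (Fin d) (Fin d) ℂ} (hQ : Q.PosSemidef)
    (a : ℝ) (ha : 0 ≤ a) : ((a : ℂ) • Q).PosSemidef := by
  refine .of_dotProduct_mulVec_nonneg ?_ ?_
  · simp [Matrix.IsHermitian, Matrix.conjTranspose_smul, Complex.star_def,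
      Complex.conj_ofReal, hQ.1.eq]
  · intro x
    rw [Matrix.smul_mulVec, dotProduct_smul, smul_eq_mul]
    exact mul_nonneg (Complex.zero_le_real.2 ha) (hQ.dotProduct_mulVec_nonneg x)

lemma aux_msqrt_smul {d : ℕ} {Q : Matrix (Fin d) (Fin d) ℂ} (hQh : Q.IsHermitian)
    (hQQ : Q * Q = Q) (c : ℝ) (hc : 0 ≤ c) :
    msqrt ((c : ℂ) • Q) = ((Real.sqrt c : ℝ) : ℂ) • Q := by
  have hQpsd : Q.PosSemidef := by
    have h := Matrix.posSemidef_conjTranspose_mul_self Q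
    rwa [hQh.eq, hQQ] at h
  have h1 : ((c : ℂ) • Q).PosSemidef := aux_psd_smul hQpsd c hc
  have h2 : (((Real.sqrt c : ℝ) : ℂ) • Q).PosSemidef :=
    aux_psd_smul hQpsd _ (Real.sqrt_nonneg c)
  have hsq : (((Real.sqrt c : ℝ) : ℂ) • Q) ^ 2 = (c : ℂ) • Q := by
    rw [sq, smul_mul_smul_comm, hQQ]
    norm_cast
    rw [Real.mul_self_sqrt hc]
  have hQsa : IsSelfAdjoint Q := hQh
  have hspec : spectrum ℝ Q ⊆ {0, 1} :=
    (isIdempotentElem_iff_spectrum_subset ℝ Q hQsa).mp hQQ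
  have hmsqrt : ∀ A : Matrix (Fin d) (Fin d) ℂ, (hA : A.PosSemidef) →
      msqrt A = cfc (fun x : ℝ => √x) A := by
    intro A hA
    rw [msqrt, dif_pos hA, hA.1.cfc_eq, IsHermitian.cfc, Unitary.conjStarAlgAut_apply]
    rfl
  have e1 : ((c : ℂ) • Q) = cfc (fun x : ℝ => c * x) Q := by
    rw [cfc_const_mul_id c Q hQsa]
    exact Complex.coe_smul c Q
  rw [hmsqrt _ h1, e1, ← cfc_comp (fun x : ℝ => √x) (fun x : ℝ => c * x) Q]
  rw [cfc_congr (g := fun x : ℝ => √c * x) (fun x hx => by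
    rcases hspec hx with h | h <;> simp_all), cfc_const_mul_id _ Q hQsa]
  exact (Complex.coe_smul _ Q).symm

lemma aux_exp_sum {d M : ℕ}
    (P : Fin M → Matrix (Fin d) (Fin d) ℂ)
    (hPorth : ∀ i j, P i * P j = if i = j then P i else 0)
    (hPsum : ∑ i, P i = 1) (c : Fin M → ℂ) :
    NormedSpace.exp (∑ i, c i • P i) = ∑ i, Complex.exp (c i) • P i := by
  classical
  letI : SeminormedRing (Matrix (Fin d) (Fin d) ℂ) := Matrix.linftyOpSemiNormedRing
  letI : NormedRing (Matrix (Fin d) (Fin d) ℂ) := Matrix.linftyOpNormedRing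
  letI : NormedAlgebra ℂ (Matrix (Fin d) (Fin d) ℂ) := Matrix.linftyOpNormedAlgebra
  let φ : (Fin M → ℂ) →ₐ[ℂ] Matrix (Fin d) (Fin d) ℂ :=
  { toFun := fun c => ∑ i, c i • P i
    map_one' := by simp [hPsum]
    map_mul' := fun a b => by
      show ∑ i, (a i * b i) • P i = (∑ i, a i • P i) * (∑ j, b j • P j)
      rw [Finset.sum_mul_sum]
      symm
      simp only [smul_mul_assoc, mul_smul_comm, smul_smul, hPorth, smul_ite, smul_zero]
      simp [Finset.sum_ite_eq, Finset.sum_ite_eq', mul_comm]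
    map_zero' := by simp
    map_add' := fun a b => by
      show ∑ i, (a i + b i) • P i = _
      simp [add_smul, Finset.sum_add_distrib]
    commutes' := fun r => by
      show ∑ i, (algebraMap ℂ (Fin M → ℂ) r) i • P i = _
      simp only [Pi.algebraMap_apply, Algebra.algebraMap_self, RingHom.id_apply]
      rw [← Finset.smul_sum, hPsum, Algebra.algebraMap_eq_smul_one] }
  have hcont : Continuous φ := φ.toLinearMap.continuous_of_finiteDimensional
  have h2 : NormedSpace.exp c = fun i => Complex.exp (c i) := by
    rw [Pi.exp_def]
    funext i
    rw [← Complex.exp_eq_exp_ℂ]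
  calc NormedSpace.exp (∑ i, c i • P i) = NormedSpace.exp (φ c) := rfl
    _ = φ (NormedSpace.exp c) := (NormedSpace.map_exp φ hcont c).symm
    _ = ∑ i, Complex.exp (c i) • P i := by rw [h2]; rfl

theorem fidelity_thermal_ground_eq'
    {d M : ℕ} (hd : 1 ≤ d) (hM : 2 ≤ M)
    (lam : Fin M → ℝ) (hlam : Monotone lam)
    (P : Fin M → Matrix (Fin d) (Fin d) ℂ)
    (hPne : ∀ i, P i ≠ 0)
    (hPherm : ∀ i, (P i).IsHermitian)
    (hPorth : ∀ i j, P i * P j = if i = j then P i else 0)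
    (hPsum : ∑ i, P i = 1)
    (H : Matrix (Fin d) (Fin d) ℂ)
    (hH : H = ∑ i, (lam i : ℂ) • P i)
    (i0 : Fin M) (hi0 : i0 = ⟨0, by linarith⟩)
    (i1 : Fin M) (hi1 : i1 = ⟨1, by linarith⟩)
    (dG : ℕ) (hdGpos : 0 < dG) (hdG : (P i0).trace = (dG : ℂ))
    (β : ℝ) (hβ : 0 ≤ β) :
    ((msqrt (msqrt (((P i0).trace)⁻¹ • P i0) *
      (((NormedSpace.exp ((-(β : ℂ)) • H)).trace)⁻¹ •
          NormedSpace.exp ((-(β : ℂ)) • H)) *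
      msqrt (((P i0).trace)⁻¹ • P i0))).trace.re) ^ 2 =
      1 / (1 + (1 / (dG : ℝ)) *
        ∑ i ∈ Finset.univ.erase i0,
          Real.exp (-β * (lam i - lam i0)) * ((P i).trace).re) := by
  classical
  have hQQ0 : P i0 * P i0 = P i0 := by simpa using hPorth i0 i0
  have hPpsd : ∀ i, (P i).PosSemidef := fun i => by
    have h := Matrix.posSemidef_conjTranspose_mul_self (P i)
    rwa [(hPherm i).eq, show P i * P i = P i from by simpa using hPorth i i] at h
  set t : Fin M → ℝ := fun i => ((P i).trace).re with ht_def
  have htrace : ∀ i, (P i).trace = ((t i : ℝ) : ℂ) := by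
    intro i
    have h1 : (starRingEnd ℂ) (P i).trace = (P i).trace := by
      rw [← Complex.star_def, ← Matrix.trace_conjTranspose, (hPherm i).eq]
    exact (Complex.conj_eq_iff_re.mp h1).symm
  have htnn : ∀ i, 0 ≤ t i := fun i => by
    have h := aux_trace_nonneg (hPpsd i)
    rw [htrace i] at h
    exact Complex.zero_le_real.mp h
  have ht0 : t i0 = (dG : ℝ) := by
    have h := hdG
    rw [htrace i0] at h
    exact_mod_cast h
  set r : Fin M → ℝ := fun i => Real.exp (-β * lam i) with hr_def
  have hrpos : ∀ i, 0 < r i := fun i => Real.exp_pos _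
  have hexp : NormedSpace.exp ((-(β : ℂ)) • H) = ∑ i, ((r i : ℝ) : ℂ) • P i := by
    have h1 : (-(β : ℂ)) • H = ∑ i, (((-β * lam i : ℝ)) : ℂ) • P i := by
      rw [hH, Finset.smul_sum]
      refine Finset.sum_congr rfl fun i _ => ?_
      rw [smul_smul]
      congr 1
      push_cast
      ring
    rw [h1, aux_exp_sum P hPorth hPsum]
    refine Finset.sum_congr rfl fun i _ => ?_
    rw [← Complex.ofReal_exp]
  set Z : ℝ := ∑ i, r i * t i with hZ_def
  have hZpos : 0 < Z :=
    Finset.sum_pos' (fun i _ => mul_nonneg (hrpos i).le (htnn i))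
      ⟨i0, Finset.mem_univ _,
        mul_pos (hrpos i0) (by rw [ht0]; exact_mod_cast hdGpos)⟩
  have htraceexp : (NormedSpace.exp ((-(β : ℂ)) • H)).trace = ((Z : ℝ) : ℂ) := by
    rw [hexp, Matrix.trace_sum, hZ_def]
    push_cast
    refine Finset.sum_congr rfl fun i _ => ?_
    rw [Matrix.trace_smul, htrace i, smul_eq_mul]
  set s : ℝ := Real.sqrt ((dG : ℝ)⁻¹) with hs_def
  have hmsσ : msqrt (((P i0).trace)⁻¹ • P i0) = ((s : ℝ) : ℂ) • P i0 := by
    rw [hdG, show ((dG : ℂ))⁻¹ = (((dG : ℝ)⁻¹ : ℝ) : ℂ) by push_cast; ring]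
    exact aux_msqrt_smul (hPherm i0) hQQ0 _ (by positivity)
  set c : ℝ := (dG : ℝ)⁻¹ * Z⁻¹ * r i0 with hc_def
  have hcnn : 0 ≤ c := by
    apply mul_nonneg (mul_nonneg (by positivity) (inv_nonneg.2 hZpos.le)) (hrpos i0).le
  have hPmul : P i0 * (∑ j, ((r j : ℝ) : ℂ) • P j) = ((r i0 : ℝ) : ℂ) • P i0 := by
    rw [Finset.mul_sum]
    simp [mul_smul_comm, hPorth, Finset.sum_ite_eq, Finset.sum_ite_eq']
  have hsand : (((s : ℝ) : ℂ) • P i0) * ((((Z : ℝ) : ℂ))⁻¹ • ∑ i, ((r i : ℝ) : ℂ) • P i) *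
      (((s : ℝ) : ℂ) • P i0) = ((c : ℝ) : ℂ) • P i0 := by
    simp only [smul_mul_assoc, mul_smul_comm, smul_smul]
    rw [hPmul]
    simp only [smul_mul_assoc, smul_smul, hQQ0]
    congr 1
    have hs2 : s * s = (dG : ℝ)⁻¹ := Real.mul_self_sqrt (by positivity)
    rw [hc_def, ← hs2]
    push_cast
    ring
  rw [hmsσ, htraceexp, hexp, hsand, aux_msqrt_smul (hPherm i0) hQQ0 c hcnn,
    Matrix.trace_smul, hdG, smul_eq_mul]
  have hre : ((Real.sqrt c : ℂ) * (dG : ℂ)).re = Real.sqrt c * (dG : ℝ) := by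
    have : ((Real.sqrt c : ℂ) * (dG : ℂ)) = ((Real.sqrt c * (dG : ℝ) : ℝ) : ℂ) := by push_cast; ring
    rw [this, Complex.ofReal_re]
  rw [hre, mul_pow, Real.sq_sqrt hcnn]
  -- now pure real arithmetic
  have hS : ∑ i ∈ Finset.univ.erase i0, Real.exp (-β * (lam i - lam i0)) * t i
      = (Z - r i0 * (dG : ℝ)) / r i0 := by
    rw [eq_div_iff (hrpos i0).ne', Finset.sum_mul]
    have hterm : ∀ i, Real.exp (-β * (lam i - lam i0)) * t i * r i0 = r i * t i := by
      intro i
      rw [hr_def]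
      simp only
      rw [mul_right_comm, ← Real.exp_add]
      ring_nf
    rw [Finset.sum_congr rfl fun i _ => hterm i]
    have hsplit : r i0 * t i0 + ∑ i ∈ Finset.univ.erase i0, r i * t i = Z :=
      Finset.add_sum_erase Finset.univ (fun i => r i * t i) (Finset.mem_univ i0)
    rw [← hsplit, ht0]
    ring
  rw [hS, hc_def]
  have hdG' : (0:ℝ) < (dG : ℝ) := by exact_mod_cast hdGpos
  have hZne : Z ≠ 0 := hZpos.ne'
  field_simp
  have hr0 : r i0 ≠ 0 := (hrpos i0).ne'
  rw [show (dG:ℝ) + (Z - (dG:ℝ) * r i0) / r i0 = Z / r i0 by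
    rw [eq_div_iff hr0, add_mul, div_mul_cancel₀ _ hr0]; ring, eq_div_iff (by positivity)]
  field_simp

/-- exact formula for the fidelity between the thermal state and the
normalized ground-space projector. -/
theorem fidelity_thermal_ground_eq
    {d M : ℕ} (hd : 1 ≤ d) (hM : 2 ≤ M)
    (lam : Fin M → ℝ) (hlam : Monotone lam)
    (P : Fin M → Matrix (Fin d) (Fin d) ℂ)
    (hPne : ∀ i, P i ≠ 0)
    (hPherm : ∀ i, (P i).IsHermitian)
    (hPorth : ∀ i j, P i * P j = if i = j then P i else 0)
    (hPsum : ∑ i, P i = 1)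
    (H : Matrix (Fin d) (Fin d) ℂ)
    (hH : H = ∑ i, (lam i : ℂ) • P i)
    (i0 : Fin M) (hi0 : i0 = ⟨0, by omega⟩)
    (i1 : Fin M) (hi1 : i1 = ⟨1, by omega⟩)
    (dG : ℕ) (hdGpos : 0 < dG) (hdG : (P i0).trace = (dG : ℂ))
    (β : ℝ) (hβ : 0 ≤ β) :
    fidelity (((NormedSpace.exp ((-(β : ℂ)) • H)).trace)⁻¹ •
          NormedSpace.exp ((-(β : ℂ)) • H))
        (((P i0).trace)⁻¹ • P i0) =
      1 / (1 + (1 / (dG : ℝ)) *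
        ∑ i ∈ Finset.univ.erase i0,
          Real.exp (-β * (lam i - lam i0)) * ((P i).trace).re) := by
  have h := fidelity_thermal_ground_eq' hd hM lam hlam P hPne hPherm hPorth hPsum H hH
    i0 hi0 i1 hi1 dG hdGpos hdG β hβ
  simpa [fidelity] using h
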